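/- arXiv:1802.06726 — 3 statements merged into one kernel-verified Lean document; each statement's English description precedes it below -/
import Mathlib

section
/- Let g: ℝ → ℝ be continuously differentiable with g(x+1)=g(x)+1 for all x, p ∈ ℤ, and set m(x) = g(x) - x - p. Suppose sup_ℝ |g'(x) - 1| ≤ ε with 0 < ε < 1, and m(x) ≠ 0 for all x. Then for any x and any y in the closed interval with endpoints x and g(x) - p, we have 1 - ε ≤ m(y)/m(x) ≤ 1 + ε. -/
theorem le_div_and_div_le_of_abs_sub_le {a b ε : ℝ} (hb : b ≠ 0) (h : |a - b| ≤ ε * |b|) :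
    1 - ε ≤ a / b ∧ a / b ≤ 1 + ε := by
  have hratio : |a / b - 1| ≤ ε := by
    rwa [div_sub_one hb, abs_div, div_le_iff₀ (abs_pos.mpr hb)]
  constructor <;> linarith [abs_le.mp hratio]

theorem abs_displacement_sub_le {g : ℝ → ℝ} (hg : Differentiable ℝ g) {ε : ℝ}
    (hsup : ∀ x, |deriv g x - 1| ≤ ε) (c x y : ℝ) :
    |(g y - y - c) - (g x - x - c)| ≤ ε * |y - x| := by
  have hderiv : ∀ z, HasDerivAt (fun t ↦ g t - t - c) (deriv g z - 1) z := fun z ↦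
    (((hg z).hasDerivAt.sub (hasDerivAt_id z)).sub_const c)
  refine convex_univ.norm_image_sub_le_of_norm_deriv_le (fun z _ ↦ (hderiv z).differentiableAt)
    (fun z _ ↦ ?_) (Set.mem_univ x) (Set.mem_univ y)
  rw [(hderiv z).deriv]
  exact hsup z

theorem stmt2_general (g : ℝ → ℝ) (hg : ContDiff ℝ 1 g)
    (p : ℤ)
    (m : ℝ → ℝ) (hm : ∀ x, m x = g x - x - p)
    (ε : ℝ)
    (hsup : ∀ x, |deriv g x - 1| ≤ ε)
    (hm0 : ∀ x, m x ≠ 0) :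
    ∀ x : ℝ, ∀ y ∈ Set.uIcc x (g x - p),
      1 - ε ≤ m y / m x ∧ m y / m x ≤ 1 + ε := by
  intro x y hy
  have hε : 0 ≤ ε := (abs_nonneg _).trans (hsup x)
  have hyx : |y - x| ≤ |m x| := by
    simpa [hm x, sub_right_comm] using Set.abs_sub_left_of_mem_uIcc hy
  refine le_div_and_div_le_of_abs_sub_le (hm0 x) ?_
  calc |m y - m x| ≤ ε * |y - x| := by
        simpa only [hm] using abs_displacement_sub_le (hg.differentiable one_ne_zero) hsup p x y
    _ ≤ ε * |m x| := mul_le_mul_of_nonneg_left hyx hε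

theorem stmt2 (g : ℝ → ℝ) (hg : ContDiff ℝ 1 g)
    (hper : ∀ x, g (x + 1) = g x + 1) (p : ℤ)
    (m : ℝ → ℝ) (hm : ∀ x, m x = g x - x - p)
    (ε : ℝ) (hε0 : 0 < ε) (hε1 : ε < 1)
    (hsup : ∀ x, |deriv g x - 1| ≤ ε)
    (hm0 : ∀ x, m x ≠ 0) :
    ∀ x : ℝ, ∀ y ∈ Set.uIcc x (g x - p),
      1 - ε ≤ m y / m x ∧ m y / m x ≤ 1 + ε :=
  stmt2_general g hg p m hm ε hsup hm0
end

section
/- Let g: ℝ → ℝ be increasing, differentiable, with g(x+1) = g(x)+1, conjugate to the irrational translation T_α, and let m_n(x) = g^{q_n}(x) - x - p_n where p_n/q_n are convergents of α. Then for any x ∈ ℝ, the sum over one period of the orbit satisfies Σ_{l=0}^{q_{n+1}-1} |m_n(g^l(x))| < 1. -/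
/-!
Write `x = h t`. The conjugacy gives `g^l x = h (t + l α)`, and since `h` commutes with integer
translations, `m_n (g^l x) = h (t + l α + θ) - h (t + l α)` with `θ = q_n α - p_n`. So the sum is
the total `h`-length of `q_{n+1}` intervals of length `|θ|` starting at the points
`t + l α + min θ 0`. Consecutive convergents form a unimodular pair whose errors have opposite
signs. This gives the best approximation property `|θ| ≤ |k α - r|` for `0 < k < q_{n+1}`, which
makes the intervals disjoint modulo 1, and the identity `q_{n+1} |θ_n| + q_n |θ_{n+1}| = 1`, which
shows that they leave a gap of positive length. Since `h` is a strictly increasing lift of degree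
one, their `h`-lengths add up to less than `h (s + 1) - h s = 1`.
-/

open Set Finset

section Intervals

variable {ι : Type*} {F : ℝ → ℝ} {s : Finset ι} {a b : ι → ℝ} {c d : ℝ}

lemma right_le_of_disjoint_Ico {a₁ b₁ a₂ b₂ : ℝ} (h : Disjoint (Ico a₁ b₁) (Ico a₂ b₂))
    (ha : a₁ ≤ a₂) (hab : a₂ < b₂) : b₁ ≤ a₂ := by
  rw [Ico_disjoint_Ico, max_eq_right ha] at h
  exact (min_le_iff.mp h).resolve_right hab.not_ge

lemma sum_sub_le_of_pairwiseDisjoint_Ico (hF : Monotone F) (hab : ∀ i ∈ s, a i < b i)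
    (hca : ∀ i ∈ s, c ≤ a i) (hbd : ∀ i ∈ s, b i ≤ d) (hcd : c ≤ d)
    (hdisj : (s : Set ι).PairwiseDisjoint fun i ↦ Ico (a i) (b i)) :
    ∑ i ∈ s, (F (b i) - F (a i)) ≤ F d - F c := by
  classical
  induction s using induction_on_max_value a generalizing d with
  | empty => simpa using hF hcd
  | insert i s hi hmax ih =>
    simp only [Finset.mem_insert, forall_eq_or_imp] at hab hca hbd
    have hbelow : ∀ j ∈ s, b j ≤ a i := fun j hj ↦ right_le_of_disjoint_Ico
      (hdisj (by simp [hj]) (by simp) (ne_of_mem_of_not_mem hj hi)) (hmax j hj) hab.1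
    have hrest := ih hab.2 hca.2 hbelow hca.1 (hdisj.subset (by simp))
    rw [sum_insert hi]
    linarith [hF hbd.1]

lemma sum_sub_lt_of_pairwiseDisjoint_Ico (hF : StrictMono F) (hab : ∀ i ∈ s, a i < b i)
    (hca : ∀ i ∈ s, c ≤ a i) (hbd : ∀ i ∈ s, b i ≤ d)
    (hdisj : (s : Set ι).PairwiseDisjoint fun i ↦ Ico (a i) (b i))
    (hlen : ∑ i ∈ s, (b i - a i) < d - c) :
    ∑ i ∈ s, (F (b i) - F (a i)) < F d - F c := by
  classical
  induction s using induction_on_max_value a generalizing d with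
  | empty => simpa using hF (by simpa using hlen)
  | insert i s hi hmax ih =>
    simp only [Finset.mem_insert, forall_eq_or_imp] at hab hca hbd
    rw [sum_insert hi] at hlen ⊢
    have hbelow : ∀ j ∈ s, b j ≤ a i := fun j hj ↦ right_le_of_disjoint_Ico
      (hdisj (by simp [hj]) (by simp) (ne_of_mem_of_not_mem hj hi)) (hmax j hj) hab.1
    have hdisj' := hdisj.subset (coe_subset.mpr (subset_insert i s))
    rcases hbd.1.lt_or_eq with hbd_lt | rfl
    · have hrest := sum_sub_le_of_pairwiseDisjoint_Ico hF.monotone hab.2 hca.2 hbelow hca.1 hdisj'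
      linarith [hF hbd_lt]
    · linarith [ih hab.2 hca.2 hbelow hdisj' (by linarith)]

lemma map_add_int_of_map_add_one (hF1 : ∀ x, F (x + 1) = F x + 1) (x : ℝ) (k : ℤ) :
    F (x + k) = F x + k := by
  have hper : Function.Periodic (fun x ↦ F x - x) 1 := fun x ↦ by simp only [hF1]; ring
  have := (hper.int_mul k) x
  simp only [mul_one] at this
  linarith

lemma sum_sub_lt_one_of_separated (hF : StrictMono F) (hF1 : ∀ x, F (x + 1) = F x + 1)
    {u : ι → ℝ} {ε : ℝ} (hε : 0 < ε)
    (hsep : ∀ i ∈ s, ∀ j ∈ s, i ≠ j → ∀ r : ℤ, ε ≤ |u i - u j - r|) (hcard : #s * ε < 1) :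
    ∑ i ∈ s, (F (u i + ε) - F (u i)) < 1 := by
  rcases s.eq_empty_or_nonempty with rfl | ⟨i₀, hi₀⟩
  · simp
  set G : ℝ → ℝ := fun x ↦ F (x + u i₀)
  set v : ι → ℝ := fun i ↦ Int.fract (u i - u i₀)
  have hu : ∀ i, u i = v i + u i₀ + ⌊u i - u i₀⌋ := fun i ↦ by simp only [v, Int.fract]; ring
  have hvsep : ∀ i ∈ s, ∀ j ∈ s, i ≠ j → ∀ r : ℤ, ε ≤ |v i - v j - r| := by
    intro i hi j hj hij r
    convert hsep i hi j hj hij (r + ⌊u i - u i₀⌋ - ⌊u j - u i₀⌋) using 2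
    simp only [v, Int.fract]; push_cast; ring
  have hterm : ∀ i, F (u i + ε) - F (u i) = G (v i + ε) - G (v i) := by
    intro i
    rw [hu i, add_right_comm _ _ ε, map_add_int_of_map_add_one hF1,
      map_add_int_of_map_add_one hF1, add_sub_add_right_eq_sub, add_right_comm]
  have hvε : ∀ i ∈ s, v i + ε ≤ 1 := by
    intro i hi
    by_cases hii : i = i₀
    · have : (1 : ℝ) ≤ #s := by exact_mod_cast card_pos.mpr ⟨i₀, hi₀⟩
      simp only [hii, v, sub_self, Int.fract_zero]
      nlinarith
    · have := hvsep i hi i₀ hi₀ hii 1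
      simp only [v, sub_self, Int.fract_zero, sub_zero, Int.cast_one] at this
      rw [abs_of_neg (by linarith [Int.fract_lt_one (u i - u i₀)])] at this
      linarith
  have hdisj : (s : Set ι).PairwiseDisjoint fun i ↦ Ico (v i) (v i + ε) := by
    intro i hi j hj hij
    rw [Function.onFun, Ico_disjoint_Ico]
    rcases le_abs'.mp (by simpa using hvsep i hi j hj hij 0) with h | h
    · exact (min_le_left _ _).trans (by linarith [le_max_right (v i) (v j)])
    · exact (min_le_right _ _).trans (by linarith [le_max_left (v i) (v j)])
  calc ∑ i ∈ s, (F (u i + ε) - F (u i)) = ∑ i ∈ s, (G (v i + ε) - G (v i)) :=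
        sum_congr rfl fun i _ ↦ hterm i
    _ < G 1 - G 0 := sum_sub_lt_of_pairwiseDisjoint_Ico (hF.comp (strictMono_id.add_const _))
        (fun i _ ↦ by linarith) (fun i _ ↦ Int.fract_nonneg _) hvε hdisj (by simpa using hcard)
    _ = 1 := by simp only [G]; rw [add_comm 1, hF1, zero_add, add_sub_cancel_left]

end Intervals

lemma abs_add_of_mul_nonneg {a b : ℝ} (h : 0 ≤ a * b) : |a + b| = |a| + |b| :=
  (abs_add_eq_add_abs_iff a b).mpr (mul_nonneg_iff.mp h)

section Unimodular

variable {α : ℝ} {q q' : ℕ} {p p' : ℤ}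

lemma mul_abs_add_mul_abs_eq_one_of_unimodular (hdet : |(q : ℤ) * p' - p * q'| = 1)
    (hsign : (q * α - p) * (q' * α - p') < 0) :
    q' * |q * α - p| + q * |q' * α - p'| = 1 := by
  have hsame : 0 ≤ q' * (q * α - p) * (q * -(q' * α - p')) := by
    rw [show q' * (q * α - p) * (q * -(q' * α - p')) = (q' * q : ℝ) * -((q * α - p) * (q' * α - p'))
      by ring]
    exact mul_nonneg (by positivity) (by linarith)
  calc q' * |q * α - p| + q * |q' * α - p'| = |q' * (q * α - p) + q * -(q' * α - p')| := by
        rw [abs_add_of_mul_nonneg hsame, abs_mul, abs_mul, abs_neg, Nat.abs_cast, Nat.abs_cast]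
    _ = ((|(q : ℤ) * p' - p * q'| : ℤ) : ℝ) := by push_cast; ring_nf
    _ = 1 := by rw [hdet, Int.cast_one]

lemma mul_abs_lt_one_of_unimodular (hdet : |(q : ℤ) * p' - p * q'| = 1)
    (hsign : (q * α - p) * (q' * α - p') < 0) (hq : 1 ≤ q) : q' * |q * α - p| < 1 := by
  have hθ' := abs_pos.mpr (right_ne_zero_of_mul hsign.ne)
  have hqθ' : 0 < (q : ℝ) * |q' * α - p'| := mul_pos (by exact_mod_cast hq) hθ'
  linarith [mul_abs_add_mul_abs_eq_one_of_unimodular hdet hsign]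

lemma abs_mul_sub_le_of_unimodular (hdet : |(q : ℤ) * p' - p * q'| = 1)
    (hsign : (q * α - p) * (q' * α - p') < 0) {k r : ℤ} (hk : 0 < k) (hkq : k < q') :
    |q * α - p| ≤ |k * α - r| := by
  -- `(k, r) = x • (q, p) + y • (q', p')`; then `0 < k < q'` forces `x ≠ 0` and `x * y ≤ 0`, so the
  -- two terms of `k * α - r = x * θ + y * θ'` have the same sign.
  set D : ℤ := q * p' - p * q'
  have hD : D * D = 1 := by
    rcases (abs_eq zero_le_one).mp hdet with h | h <;> rw [h] <;> norm_num
  set x : ℤ := D * (k * p' - r * q')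
  set y : ℤ := D * (r * q - k * p)
  have hk_eq : k = x * q + y * q' := by linear_combination (-k) * hD
  have hr_eq : r = x * p + y * p' := by linear_combination (-r) * hD
  have hdecomp : k * α - r = x * (q * α - p) + y * (q' * α - p') := by
    rw [hk_eq, hr_eq]; push_cast; ring
  have hx : x ≠ 0 := by
    rintro hx
    rw [hx, zero_mul, zero_add] at hk_eq
    rcases le_or_gt y 0 with hy | hy <;> nlinarith
  have hxy : x * y ≤ 0 := by
    by_contra! hxy
    rcases pos_and_pos_or_neg_and_neg_of_mul_pos hxy with ⟨hx, hy⟩ | ⟨hx, hy⟩ <;> nlinarith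
  have hsame : 0 ≤ x * (q * α - p) * (y * (q' * α - p')) := by
    rw [show x * (q * α - p) * (y * (q' * α - p'))
        = -((x * y : ℤ) : ℝ) * -((q * α - p) * (q' * α - p')) by push_cast; ring]
    exact mul_nonneg (neg_nonneg.mpr (by exact_mod_cast hxy)) (by linarith)
  calc |q * α - p| ≤ |(x : ℝ)| * |q * α - p| :=
        le_mul_of_one_le_left (abs_nonneg _) (by exact_mod_cast Int.one_le_abs hx)
    _ = |x * (q * α - p)| := (abs_mul _ _).symm
    _ ≤ |k * α - r| := by
        rw [hdecomp, abs_add_of_mul_nonneg hsame]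
        exact le_add_of_nonneg_right (abs_nonneg _)

end Unimodular

open GenContFract

namespace Irrational

variable {α : ℝ} (hα : Irrational α)
include hα

lemma genContFract_not_terminatedAt (n : ℕ) : ¬(GenContFract.of α).TerminatedAt n := fun hn ↦
  let ⟨r, hr⟩ := (terminates_iff_rat α).mp ⟨n, hn⟩
  hα ⟨r, hr.symm⟩

lemma one_le_genContFract_dens (n : ℕ) : 1 ≤ (GenContFract.of α).dens n :=
  calc (1 : ℝ) ≤ Nat.fib (n + 1) := by exact_mod_cast Nat.fib_pos.mpr n.succ_pos
    _ ≤ (GenContFract.of α).dens n :=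
      succ_nth_fib_le_of_nth_den (Or.inr (hα.genContFract_not_terminatedAt (n - 1)))

lemma neg_one_pow_mul_sub_convs_pos (n : ℕ) :
    0 < (-1) ^ n * (α - (GenContFract.of α).convs n) := by
  have hstream := hα.genContFract_not_terminatedAt n
  rw [of_terminatedAt_n_iff_succ_nth_intFractPair_stream_eq_none,
    IntFractPair.succ_nth_stream_eq_none_iff] at hstream
  push Not at hstream
  obtain ⟨ifp, hifp⟩ := Option.ne_none_iff_exists'.mp hstream.1
  have hfr : 0 < ifp.fr :=
    (IntFractPair.nth_stream_fr_nonneg hifp).lt_of_ne (hstream.2 ifp hifp).symm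
  have hB : 0 < ((GenContFract.of α).contsAux (n + 1)).b := by
    rw [← nth_cont_eq_succ_nth_contAux, ← den_eq_conts_b]
    linarith [hα.one_le_genContFract_dens n]
  have hB' : 0 ≤ ((GenContFract.of α).contsAux n).b := zero_le_of_contsAux_b
  rw [sub_convs_eq hifp, if_neg (hstream.2 ifp hifp), mul_div, ← mul_pow, neg_one_mul, neg_neg,
    one_pow]
  positivity

lemma neg_one_pow_mul_dens_mul_sub_nums_pos (n : ℕ) :
    0 < (-1) ^ n * ((GenContFract.of α).dens n * α - (GenContFract.of α).nums n) := by
  have hden := zero_lt_one.trans_le (hα.one_le_genContFract_dens n)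
  have hconv : (-1) ^ n * ((GenContFract.of α).dens n * α - (GenContFract.of α).nums n)
      = (GenContFract.of α).dens n * ((-1) ^ n * (α - (GenContFract.of α).convs n)) := by
    rw [conv_eq_num_div_den]
    field_simp [hden.ne']
  rw [hconv]
  exact mul_pos hden (hα.neg_one_pow_mul_sub_convs_pos n)

lemma dens_mul_sub_nums_mul_neg (n : ℕ) :
    ((GenContFract.of α).dens n * α - (GenContFract.of α).nums n)
      * ((GenContFract.of α).dens (n + 1) * α - (GenContFract.of α).nums (n + 1)) < 0 := by
  set θ := (GenContFract.of α).dens n * α - (GenContFract.of α).nums n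
  set θ' := (GenContFract.of α).dens (n + 1) * α - (GenContFract.of α).nums (n + 1)
  have hsq : ((-1 : ℝ) ^ n) * (-1) ^ n = 1 := by rw [← mul_pow]; norm_num
  have hprod : (-1) ^ n * θ * ((-1) ^ (n + 1) * θ') = -(θ * θ') := by
    rw [pow_succ]; linear_combination (-(θ * θ')) * hsq
  linarith [mul_pos (hα.neg_one_pow_mul_dens_mul_sub_nums_pos n)
    (hα.neg_one_pow_mul_dens_mul_sub_nums_pos (n + 1))]

variable {p : ℕ → ℤ} {q : ℕ → ℕ}

lemma abs_det_convergents_eq_one (hp : ∀ n, (p n : ℝ) = (GenContFract.of α).nums n)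
    (hq : ∀ n, (q n : ℝ) = (GenContFract.of α).dens n) (n : ℕ) :
    |(q n : ℤ) * p (n + 1) - p n * q (n + 1)| = 1 := by
  have hdet :=
    SimpContFract.determinant (s := SimpContFract.of α) (hα.genContFract_not_terminatedAt n)
  rw [SimpContFract.of, ← hp, ← hq, ← hp, ← hq] at hdet
  have hdetZ : (q n : ℤ) * p (n + 1) - p n * q (n + 1) = -(-1) ^ (n + 1) := by
    have : ((q n : ℤ) * p (n + 1) - p n * q (n + 1) : ℝ) = -(-1) ^ (n + 1) := by
      push_cast; linarith
    exact_mod_cast this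
  rw [hdetZ, abs_neg, abs_pow, abs_neg, abs_one, one_pow]

end Irrational

lemma Monotone.abs_map_add_sub_map {F : ℝ → ℝ} (hF : Monotone F) (y θ : ℝ) :
    |F (y + θ) - F y| = F (y + min θ 0 + |θ|) - F (y + min θ 0) := by
  rcases le_total 0 θ with hθ | hθ
  · rw [min_eq_right hθ, abs_of_nonneg hθ, add_zero,
      abs_of_nonneg (sub_nonneg.mpr (hF (by linarith)))]
  · rw [min_eq_left hθ, abs_of_nonpos hθ, add_neg_cancel_right,
      abs_of_nonpos (sub_nonpos.mpr (hF (by linarith))), neg_sub]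

lemma Function.Semiconj.iterate_apply_of_add_right {g h : ℝ → ℝ} {α : ℝ}
    (hconj : Function.Semiconj h (· + α) g) (l : ℕ) (t : ℝ) : g^[l] (h t) = h (t + l * α) := by
  rw [← (hconj.iterate_right l) t, add_right_iterate_apply, nsmul_eq_mul]

lemma le_abs_sub_mul_sub_of_forall_int {α ε : ℝ} {Q : ℕ}
    (h : ∀ k r : ℤ, 0 < k → k < Q → ε ≤ |k * α - r|) {i j : ℕ} (hi : i < Q) (hj : j < Q)
    (hij : i ≠ j) (r : ℤ) : ε ≤ |(i - j : ℝ) * α - r| := by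
  wlog hlt : j < i generalizing i j r
  · rw [← abs_neg, show -((i - j : ℝ) * α - r) = (j - i : ℝ) * α - (-r : ℤ) by push_cast; ring]
    exact this hj hi hij.symm (-r) (by omega)
  exact_mod_cast h (i - j) r (by omega) (by omega)

theorem stmt9_general (g : ℝ → ℝ)
    (α : ℝ) (hα : Irrational α)
    (h : ℝ → ℝ) (hhmono : StrictMono h)
    (hhsurj : Function.Surjective h) (hhper : ∀ x, h (x + 1) = h x + 1)
    (hconj : ∀ x, g (h x) = h (x + α))
    (p : ℕ → ℤ) (q : ℕ → ℕ)
    (hp : ∀ n, (p n : ℝ) = (GenContFract.of α).nums n)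
    (hq : ∀ n, (q n : ℝ) = (GenContFract.of α).dens n)
    (n : ℕ) (m : ℝ → ℝ) (hm : ∀ x, m x = g^[q n] x - x - p n) :
    ∀ x : ℝ, ∑ l ∈ Finset.range (q (n + 1)), |m (g^[l] x)| < 1 := by
  intro x
  obtain ⟨t, rfl⟩ := hhsurj x
  set θ : ℝ := q n * α - p n
  have hdet := hα.abs_det_convergents_eq_one hp hq n
  have hsign : θ * (q (n + 1) * α - p (n + 1)) < 0 := by
    simpa only [θ, hp, hq] using hα.dens_mul_sub_nums_mul_neg n
  have hθ : 0 < |θ| := abs_pos.mpr (left_ne_zero_of_mul hsign.ne)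
  have hlen : q (n + 1) * |θ| < 1 := mul_abs_lt_one_of_unimodular hdet hsign
    (by exact_mod_cast hq n ▸ hα.one_le_genContFract_dens n)
  have horbit := Function.Semiconj.iterate_apply_of_add_right (fun y ↦ (hconj y).symm)
  have hterm : ∀ l : ℕ, |m (g^[l] (h t))|
      = h (t + l * α + min θ 0 + |θ|) - h (t + l * α + min θ 0) := fun l ↦ by
    have hshift := map_add_int_of_map_add_one hhper (t + l * α + θ) (p n)
    rw [show t + l * α + θ + p n = t + l * α + q n * α by simp only [θ]; ring] at hshift
    rw [hm, horbit, horbit, hshift, ← hhmono.monotone.abs_map_add_sub_map]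
    congr 1
    ring
  have hbest (k r : ℤ) (hk : 0 < k) (hkq : k < q (n + 1)) : |θ| ≤ |k * α - r| :=
    abs_mul_sub_le_of_unimodular hdet hsign hk hkq
  rw [sum_congr rfl fun l _ ↦ hterm l]
  refine sum_sub_lt_one_of_separated hhmono hhper hθ (fun i hi j hj hij r ↦ ?_)
    (by simpa using hlen)
  convert le_abs_sub_mul_sub_of_forall_int hbest (mem_range.mp hi) (mem_range.mp hj) hij r using 2
  ring

theorem stmt9 (g : ℝ → ℝ) (hgmono : StrictMono g) (hgdiff : Differentiable ℝ g)
    (hper : ∀ x, g (x + 1) = g x + 1)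
    (α : ℝ) (hα : Irrational α)
    (h : ℝ → ℝ) (hhmono : StrictMono h) (hhcont : Continuous h)
    (hhsurj : Function.Surjective h) (hhper : ∀ x, h (x + 1) = h x + 1)
    (hconj : ∀ x, g (h x) = h (x + α))
    (p : ℕ → ℤ) (q : ℕ → ℕ)
    (hp : ∀ n, (p n : ℝ) = (GenContFract.of α).nums n)
    (hq : ∀ n, (q n : ℝ) = (GenContFract.of α).dens n)
    (n : ℕ) (m : ℝ → ℝ) (hm : ∀ x, m x = g^[q n] x - x - p n) :
    ∀ x : ℝ, ∑ l ∈ Finset.range (q (n + 1)), |m (g^[l] x)| < 1 :=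
  stmt9_general g α hα h hhmono hhsurj hhper hconj p q hp hq n m hm
end

section
/- Let g: ℝ → ℝ be an increasing homeomorphism with g(x+1) = g(x)+1 and irrational rotation number α with convergents p_n/q_n. Set g_n(x) = g^{q_n}(x) - p_n. Then for every x ∈ ℝ, g_{n+1}(x) lies in the interval J_n(x) = [g_n^{-1}(x), g_n(x)]. -/
/-!
Write `β n = q n * α - p n`. Through the semi-conjugacy, `gn n (h y) = h (y + β n)` and
`gninv n (h y) = h (y - β n)`; as `h` is monotone and onto, it suffices that `β (n + 1)` lies
between `-β n` and `β n`. In fact `β (n + 1) = -ζ * β n`, where `ζ ∈ (0, 1)` is the fractional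
part produced at step `n + 1` of the continued fraction algorithm: this is a rearrangement of the
exact-value formula `α = (ζ⁻¹ p (n + 1) + p n) / (ζ⁻¹ q (n + 1) + q n)`.
-/

namespace GenContFract

variable {K : Type*} [Field K] [LinearOrder K] [IsStrictOrderedRing K] [FloorRing K]

theorem one_le_of_den (v : K) (n : ℕ) : 1 ≤ (GenContFract.of v).dens n := by
  rw [← zeroth_den_eq_one (g := GenContFract.of v)]
  exact monotone_nat_of_le_succ (f := (GenContFract.of v).dens) (fun _ => of_den_mono) n.zero_le

theorem of_dens_succ_mul_sub_nums_succ {v : K} {n : ℕ} {ifp : IntFractPair K}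
    (hs : IntFractPair.stream v (n + 1) = some ifp) (hfr : ifp.fr ≠ 0) :
    (GenContFract.of v).dens (n + 1) * v - (GenContFract.of v).nums (n + 1) =
      -ifp.fr * ((GenContFract.of v).dens n * v - (GenContFract.of v).nums n) := by
  have hv := compExactValue_correctness_of_stream_eq_some hs
  simp only [GenContFract.compExactValue, if_neg hfr, nextConts, nextNum, nextDen, one_mul] at hv
  have hfr_pos : 0 < ifp.fr := (IntFractPair.nth_stream_fr_nonneg hs).lt_of_ne' hfr
  have hD : ifp.fr⁻¹ * (GenContFract.of v).dens (n + 1) + (GenContFract.of v).dens n ≠ 0 := by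
    have hq₀ := one_le_of_den v n
    have hq₁ := one_le_of_den v (n + 1)
    positivity
  simp only [den_eq_conts_b, num_eq_conts_a, nth_cont_eq_succ_nth_contAux] at hD ⊢
  rw [eq_div_iff hD] at hv
  field_simp at hv
  linear_combination hv

end GenContFract

open GenContFract

theorem neg_mul_mem_uIcc_neg_self {R : Type*} [CommRing R] [LinearOrder R] [IsStrictOrderedRing R]
    {t b : R} (ht₀ : 0 ≤ t) (ht₁ : t ≤ 1) :
    -t * b ∈ Set.uIcc (-b) b := by
  rcases le_total 0 b with hb | hb
  · exact Set.mem_uIcc.2 (Or.inl ⟨by nlinarith, by nlinarith⟩)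
  · exact Set.mem_uIcc.2 (Or.inr ⟨by nlinarith, by nlinarith⟩)

theorem Irrational.of_dens_succ_mul_sub_nums_succ_mem_uIcc {α : ℝ} (hα : Irrational α) (n : ℕ) :
    (GenContFract.of α).dens (n + 1) * α - (GenContFract.of α).nums (n + 1) ∈
      Set.uIcc (-((GenContFract.of α).dens n * α - (GenContFract.of α).nums n))
        ((GenContFract.of α).dens n * α - (GenContFract.of α).nums n) := by
  have hnt (m : ℕ) : ¬(GenContFract.of α).TerminatedAt m := fun hm =>
    hα <| ((terminates_iff_rat α).1 ⟨m, hm⟩).imp fun _ hq => hq.symm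
  obtain ⟨ifp, hs⟩ := Option.ne_none_iff_exists'.1
    (of_terminatedAt_n_iff_succ_nth_intFractPair_stream_eq_none.not.1 (hnt n))
  have hfr : ifp.fr ≠ 0 := fun h0 => hnt (n + 1)
    (of_terminatedAt_n_iff_succ_nth_intFractPair_stream_eq_none.2
      (IntFractPair.stream_eq_none_of_fr_eq_zero hs h0))
  rw [of_dens_succ_mul_sub_nums_succ hs hfr]
  exact neg_mul_mem_uIcc_neg_self (IntFractPair.nth_stream_fr_nonneg hs)
    (IntFractPair.nth_stream_fr_lt_one hs).le

namespace Function.Semiconj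

variable {g h ginv : ℝ → ℝ} {α : ℝ}

theorem iterate_apply_sub_intCast (hconj : Semiconj h (· + α) g)
    (hh : ∀ x, h (x + 1) = h x + 1) (k : ℕ) (m : ℤ) (y : ℝ) :
    g^[k] (h y) - m = h (y + (k * α - m)) := by
  have hsub : ∀ x (m : ℤ), h (x - m) = h x - m :=
    AddConstMapClass.map_sub_int (⟨h, hh⟩ : AddConstMap ℝ ℝ 1 1)
  rw [← hconj.iterate_right k y, add_right_iterate_apply, nsmul_eq_mul, ← hsub, add_sub_assoc]

theorem leftInverse_iterate_apply_add_intCast (hconj : Semiconj h (· + α) g)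
    (hh : ∀ x, h (x + 1) = h x + 1) (hinv : LeftInverse ginv g) (k : ℕ) (m : ℤ) (y : ℝ) :
    ginv^[k] (h y + m) = h (y - (k * α - m)) := by
  have := hconj.iterate_apply_sub_intCast hh k m (y - (k * α - m))
  rw [sub_add_cancel, sub_eq_iff_eq_add] at this
  rw [← this, hinv.iterate k]

end Function.Semiconj

theorem stmt19_general (g : ℝ → ℝ)
    (α : ℝ) (hα : Irrational α)
    -- Poincaré semi-conjugacy to the translation by α
    (h : ℝ → ℝ) (hhmono : Monotone h)
    (hhsurj : Function.Surjective h) (hhper : ∀ x, h (x + 1) = h x + 1)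
    (hconj : ∀ x, g (h x) = h (x + α))
    (p : ℕ → ℤ) (q : ℕ → ℕ)
    (hp : ∀ n, (p n : ℝ) = (GenContFract.of α).nums n)
    (hq : ∀ n, (q n : ℝ) = (GenContFract.of α).dens n)
    (ginv : ℝ → ℝ) (hginv : Function.LeftInverse ginv g ∧ Function.RightInverse ginv g)
    (gn : ℕ → ℝ → ℝ) (hgn : ∀ n x, gn n x = g^[q n] x - p n)
    (gninv : ℕ → ℝ → ℝ) (hgninv : ∀ n x, gninv n x = ginv^[q n] (x + p n)) :
    ∀ n : ℕ, ∀ x : ℝ, gn (n + 1) x ∈ Set.uIcc (gninv n x) (gn n x) := by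
  intro n x
  obtain ⟨y, rfl⟩ := hhsurj x
  have hsc : Function.Semiconj h (· + α) g := fun x => (hconj x).symm
  have hβ := hα.of_dens_succ_mul_sub_nums_succ_mem_uIcc n
  rw [← hq, ← hp, ← hq, ← hp] at hβ
  rw [hgn, hgn, hgninv, hsc.iterate_apply_sub_intCast hhper, hsc.iterate_apply_sub_intCast hhper,
    hsc.leftInverse_iterate_apply_add_intCast hhper hginv.1, sub_eq_add_neg]
  refine hhmono.image_uIcc_subset (Set.mem_image_of_mem h ?_)
  rw [← Set.image_const_add_uIcc]
  exact Set.mem_image_of_mem _ hβ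

theorem stmt19 (g : ℝ → ℝ) (hgmono : StrictMono g) (hgcont : Continuous g)
    (hgsurj : Function.Surjective g) (hper : ∀ x, g (x + 1) = g x + 1)
    (α : ℝ) (hα : Irrational α)
    -- Poincaré semi-conjugacy to the translation by α
    (h : ℝ → ℝ) (hhmono : Monotone h) (hhcont : Continuous h)
    (hhsurj : Function.Surjective h) (hhper : ∀ x, h (x + 1) = h x + 1)
    (hconj : ∀ x, g (h x) = h (x + α))
    (p : ℕ → ℤ) (q : ℕ → ℕ)
    (hp : ∀ n, (p n : ℝ) = (GenContFract.of α).nums n)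
    (hq : ∀ n, (q n : ℝ) = (GenContFract.of α).dens n)
    (ginv : ℝ → ℝ) (hginv : Function.LeftInverse ginv g ∧ Function.RightInverse ginv g)
    (gn : ℕ → ℝ → ℝ) (hgn : ∀ n x, gn n x = g^[q n] x - p n)
    (gninv : ℕ → ℝ → ℝ) (hgninv : ∀ n x, gninv n x = ginv^[q n] (x + p n)) :
    ∀ n : ℕ, ∀ x : ℝ, gn (n + 1) x ∈ Set.uIcc (gninv n x) (gn n x) :=
  stmt19_general g α hα h hhmono hhsurj hhper hconj p q hp hq ginv hginv gn hgn gninv hgninv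
end
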